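/- Let p ∈ [1,2), N, d ∈ ℕ, and let w_1,…,w_N ∈ ℝ^N be the rows of an N × N real matrix W with entries in {−1,1} satisfying W·Wᵀ = N·I. Let ω(1), Ω(1) ∈ (0,∞) and let T : ℝ^N → ℝ^d be a linear operator such that ‖T e_j‖_{ℓ_p^d} ≤ Ω(1) for every j ∈ {1,…,N} and ‖T(N^{−1/p} w_i)‖_{ℓ_p^d} ≥ ω(1) for every i ∈ {1,…,N}, where e_1,…,e_N are the standard coordinate vectors. Then d ≥ (ω(1)/Ω(1))^{2p/(2−p)}·N. -/

import Mathlib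

open Finset Real

lemma aux_add_rpow {r : ℝ} (hr : 1 ≤ r) {a b : ℝ} (ha : 0 ≤ a) (hb : 0 ≤ b) :
    a ^ r + b ^ r ≤ (a + b) ^ r := by
  lift a to NNReal using ha
  lift b to NNReal using hb
  exact_mod_cast NNReal.add_rpow_le_rpow_add a b hr

lemma aux_sum_rpow_le {ι : Type*} (s : Finset ι) (f : ι → ℝ) (hf : ∀ i ∈ s, 0 ≤ f i)
    {r : ℝ} (hr : 1 ≤ r) : ∑ i ∈ s, f i ^ r ≤ (∑ i ∈ s, f i) ^ r := by
  induction s using Finset.cons_induction with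
  | empty => simp [Real.zero_rpow (by positivity : r ≠ 0)]
  | cons a s ha ih =>
      rw [Finset.sum_cons, Finset.sum_cons]
      refine le_trans (add_le_add_right (ih fun i hi => hf i (Finset.mem_cons_of_mem hi)) _) ?_
      exact aux_add_rpow hr (hf a (Finset.mem_cons_self a s))
        (Finset.sum_nonneg fun i hi => hf i (Finset.mem_cons_of_mem hi))

lemma aux_power_mean {ι : Type*} (s : Finset ι) (hs : s.Nonempty) (f : ι → ℝ)
    (hf : ∀ i ∈ s, 0 ≤ f i) {q : ℝ} (hq0 : 0 < q) (hq1 : q ≤ 1) :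
    ∑ i ∈ s, f i ^ q ≤ (s.card : ℝ) ^ (1 - q) * (∑ i ∈ s, f i) ^ q := by
  have hcard : (0 : ℝ) < s.card := by exact_mod_cast Finset.card_pos.2 hs
  have h1p : (1 : ℝ) ≤ 1 / q := by rw [le_div_iff₀ hq0, one_mul]; exact hq1
  have h := Real.arith_mean_le_rpow_mean s (fun _ => (s.card : ℝ)⁻¹) (fun i => f i ^ q)
    (fun i _ => by positivity)
    (by rw [Finset.sum_const, nsmul_eq_mul, mul_inv_cancel₀ hcard.ne'])
    (fun i hi => Real.rpow_nonneg (hf i hi) q) h1p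
  have hz : ∀ i ∈ s, (f i ^ q) ^ (1 / q) = f i := fun i hi => by
    rw [← Real.rpow_mul (hf i hi), mul_one_div_cancel hq0.ne', Real.rpow_one]
  have hsum : ∑ x ∈ s, (s.card : ℝ)⁻¹ * (f x ^ q) ^ (1 / q) = (s.card : ℝ)⁻¹ * ∑ x ∈ s, f x := by
    rw [← Finset.mul_sum]; congr 1; exact Finset.sum_congr rfl hz
  rw [hsum, ← Finset.mul_sum, one_div_one_div] at h
  have hS : 0 ≤ ∑ i ∈ s, f i := Finset.sum_nonneg hf
  calc ∑ i ∈ s, f i ^ q = (s.card : ℝ) * ((s.card : ℝ)⁻¹ * ∑ i ∈ s, f i ^ q) := by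
        rw [mul_inv_cancel_left₀ hcard.ne']
    _ ≤ (s.card : ℝ) * (((s.card : ℝ)⁻¹ * ∑ i ∈ s, f i) ^ q) :=
        mul_le_mul_of_nonneg_left h hcard.le
    _ = (s.card : ℝ) * (((s.card : ℝ)⁻¹) ^ q * (∑ i ∈ s, f i) ^ q) := by
        rw [Real.mul_rpow (by positivity) hS]
    _ = ((s.card : ℝ) / (s.card : ℝ) ^ q) * (∑ i ∈ s, f i) ^ q := by
        rw [Real.inv_rpow hcard.le]; ring
    _ = (s.card : ℝ) ^ (1 - q) * (∑ i ∈ s, f i) ^ q := by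
        rw [Real.rpow_sub hcard, Real.rpow_one]

lemma aux_orth {N : ℕ} (W : Matrix (Fin N) (Fin N) ℝ)
    (hW' : W.transpose * W = (N : ℝ) • (1 : Matrix (Fin N) (Fin N) ℝ))
    (t : Fin N → ℝ) :
    ∑ i, (∑ j, W i j * t j) ^ 2 = (N : ℝ) * ∑ j, (t j) ^ 2 := by
  have key : ∀ j l, ∑ i, W i j * W i l = if j = l then (N : ℝ) else 0 := by
    intro j l
    have h := congrFun (congrFun hW' j) l
    simpa [Matrix.mul_apply, Matrix.transpose_apply, Matrix.one_apply,
      mul_ite] using h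
  calc ∑ i, (∑ j, W i j * t j) ^ 2
      = ∑ i, ∑ j, ∑ l, t j * t l * (W i j * W i l) := by
        refine Finset.sum_congr rfl fun i _ => ?_
        rw [sq, Finset.sum_mul_sum]
        exact Finset.sum_congr rfl fun j _ => Finset.sum_congr rfl fun l _ => by ring
    _ = ∑ j, ∑ l, t j * t l * ∑ i, W i j * W i l := by
        rw [Finset.sum_comm]
        refine Finset.sum_congr rfl fun j _ => ?_
        rw [Finset.sum_comm]
        exact Finset.sum_congr rfl fun l _ => by rw [Finset.mul_sum]
    _ = ∑ j, t j * t j * (N : ℝ) := by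
        refine Finset.sum_congr rfl fun j _ => ?_
        rw [Finset.sum_eq_single j]
        · rw [key j j, if_pos rfl]
        · intro l _ hl; rw [key j l, if_neg (Ne.symm hl), mul_zero]
        · intro h; exact absurd (Finset.mem_univ j) h
    _ = (N : ℝ) * ∑ j, (t j) ^ 2 := by rw [Finset.mul_sum]; exact Finset.sum_congr rfl fun j _ => by ring


lemma aux_main (p : ℝ) (hp : 1 ≤ p) (hp2 : p < 2) (N d : ℕ) (hN : 0 < N) (hd : 0 < d)
    (W : Matrix (Fin N) (Fin N) ℝ)
    (hW' : W.transpose * W = (N : ℝ) • (1 : Matrix (Fin N) (Fin N) ℝ))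
    (ω1 Ω1 : ℝ) (hω1 : 0 < ω1) (hΩ1 : 0 < Ω1)
    (t : Fin d → Fin N → ℝ)
    (hA : ∀ j, ∑ k, |t k j| ^ p ≤ Ω1 ^ p)
    (hD : ∀ i, (N : ℝ) * ω1 ^ p ≤ ∑ k, |∑ j, W i j * t k j| ^ p) :
    (ω1 / Ω1) ^ (2 * p / (2 - p)) * (N : ℝ) ≤ (d : ℝ) := by
  have hp0 : (0:ℝ) < p := by linarith
  have hN0 : (0:ℝ) < (N:ℝ) := by exact_mod_cast hN
  have hd0 : (0:ℝ) < (d:ℝ) := by exact_mod_cast hd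
  have hq0 : (0:ℝ) < p / 2 := by linarith
  have hq1 : p / 2 ≤ 1 := by linarith
  have hr : (1:ℝ) ≤ 2 / p := by rw [le_div_iff₀ hp0]; linarith
  haveI : Nonempty (Fin N) := ⟨⟨0, hN⟩⟩
  haveI : Nonempty (Fin d) := ⟨⟨0, hd⟩⟩
  -- Step B : ℓ2 bound on columns
  have hB : ∀ j, ∑ k, (t k j) ^ 2 ≤ Ω1 ^ (2:ℝ) := by
    intro j
    have h1 : ∀ k : Fin d, (t k j) ^ 2 = (|t k j| ^ p) ^ (2 / p) := by
      intro k
      have h2 : (|t k j| ^ p) ^ (2 / p) = |t k j| ^ (2:ℝ) := by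
        rw [← Real.rpow_mul (abs_nonneg _)]; congr 1; field_simp
      rw [h2, show (2:ℝ) = ((2:ℕ):ℝ) by norm_num, Real.rpow_natCast, sq_abs]
    calc ∑ k, (t k j) ^ 2 = ∑ k, (|t k j| ^ p) ^ (2 / p) :=
          Finset.sum_congr rfl fun k _ => h1 k
      _ ≤ (∑ k, |t k j| ^ p) ^ (2 / p) :=
          aux_sum_rpow_le _ _ (fun k _ => Real.rpow_nonneg (abs_nonneg _) _) hr
      _ ≤ (Ω1 ^ p) ^ (2 / p) := by
          apply Real.rpow_le_rpow (Finset.sum_nonneg fun k _ => Real.rpow_nonneg (abs_nonneg _) _)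
            (hA j) (by positivity)
      _ = Ω1 ^ (2:ℝ) := by
          rw [← Real.rpow_mul hΩ1.le]; congr 1; field_simp
  -- Step C
  have hC : ∑ k, ∑ j, (t k j) ^ 2 ≤ (N:ℝ) * Ω1 ^ (2:ℝ) := by
    rw [Finset.sum_comm]
    calc ∑ j, ∑ k, (t k j) ^ 2 ≤ ∑ _j : Fin N, Ω1 ^ (2:ℝ) :=
          Finset.sum_le_sum fun j _ => hB j
      _ = (N:ℝ) * Ω1 ^ (2:ℝ) := by
          rw [Finset.sum_const, Finset.card_univ, Fintype.card_fin, nsmul_eq_mul]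
  -- Step F
  have hF : ∀ k, ∑ i, |∑ j, W i j * t k j| ^ p ≤ (N:ℝ) * (∑ j, (t k j) ^ 2) ^ (p / 2) := by
    intro k
    have h1 : ∀ i : Fin N, |∑ j, W i j * t k j| ^ p = ((∑ j, W i j * t k j) ^ 2) ^ (p / 2) := by
      intro i
      have h2 : ((∑ j, W i j * t k j) ^ 2 : ℝ) = |∑ j, W i j * t k j| ^ (2:ℝ) := by
        rw [← sq_abs, show ((2:ℝ)) = ((2:ℕ):ℝ) by norm_num, Real.rpow_natCast]
      rw [h2, ← Real.rpow_mul (abs_nonneg _)]; congr 1; ring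
    have hpm := aux_power_mean (Finset.univ : Finset (Fin N)) Finset.univ_nonempty
      (fun i => (∑ j, W i j * t k j) ^ 2) (fun i _ => sq_nonneg _) hq0 hq1
    rw [Finset.card_univ, Fintype.card_fin] at hpm
    calc ∑ i, |∑ j, W i j * t k j| ^ p = ∑ i, ((∑ j, W i j * t k j) ^ 2) ^ (p / 2) :=
          Finset.sum_congr rfl fun i _ => h1 i
      _ ≤ (N:ℝ) ^ (1 - p / 2) * (∑ i, (∑ j, W i j * t k j) ^ 2) ^ (p / 2) := hpm
      _ = (N:ℝ) ^ (1 - p / 2) * ((N:ℝ) * ∑ j, (t k j) ^ 2) ^ (p / 2) := by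
          rw [aux_orth W hW' (t k)]
      _ = (N:ℝ) * (∑ j, (t k j) ^ 2) ^ (p / 2) := by
          rw [Real.mul_rpow hN0.le (Finset.sum_nonneg fun j _ => sq_nonneg _), ← mul_assoc,
            ← Real.rpow_add hN0, sub_add_cancel, Real.rpow_one]
  -- Step G
  have hG : ∑ k, (∑ j, (t k j) ^ 2) ^ (p / 2) ≤
      (d:ℝ) ^ (1 - p / 2) * ((N:ℝ) * Ω1 ^ (2:ℝ)) ^ (p / 2) := by
    have hpm := aux_power_mean (Finset.univ : Finset (Fin d)) Finset.univ_nonempty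
      (fun k => ∑ j, (t k j) ^ 2) (fun k _ => Finset.sum_nonneg fun j _ => sq_nonneg _) hq0 hq1
    rw [Finset.card_univ, Fintype.card_fin] at hpm
    refine hpm.trans ?_
    apply mul_le_mul_of_nonneg_left _ (Real.rpow_nonneg hd0.le _)
    exact Real.rpow_le_rpow (Finset.sum_nonneg fun k _ => Finset.sum_nonneg fun j _ => sq_nonneg _)
      hC hq0.le
  -- main chain
  have hmain : (N:ℝ) * ((N:ℝ) * ω1 ^ p) ≤
      (N:ℝ) * ((d:ℝ) ^ (1 - p / 2) * ((N:ℝ) * Ω1 ^ (2:ℝ)) ^ (p / 2)) := by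
    calc (N:ℝ) * ((N:ℝ) * ω1 ^ p) = ∑ _i : Fin N, (N:ℝ) * ω1 ^ p := by
          rw [Finset.sum_const, Finset.card_univ, Fintype.card_fin, nsmul_eq_mul]
      _ ≤ ∑ i, ∑ k, |∑ j, W i j * t k j| ^ p := Finset.sum_le_sum fun i _ => hD i
      _ = ∑ k, ∑ i, |∑ j, W i j * t k j| ^ p := Finset.sum_comm
      _ ≤ ∑ k, (N:ℝ) * (∑ j, (t k j) ^ 2) ^ (p / 2) := Finset.sum_le_sum fun k _ => hF k
      _ = (N:ℝ) * ∑ k, (∑ j, (t k j) ^ 2) ^ (p / 2) := by rw [← Finset.mul_sum]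
      _ ≤ (N:ℝ) * ((d:ℝ) ^ (1 - p / 2) * ((N:ℝ) * Ω1 ^ (2:ℝ)) ^ (p / 2)) :=
          mul_le_mul_of_nonneg_left hG hN0.le
  have h6 : (N:ℝ) * ω1 ^ p ≤ (d:ℝ) ^ (1 - p / 2) * ((N:ℝ) ^ (p / 2) * Ω1 ^ p) := by
    have h5 := (mul_le_mul_iff_right₀ hN0).mp hmain
    have hexp : ((N:ℝ) * Ω1 ^ (2:ℝ)) ^ (p / 2) = (N:ℝ) ^ (p / 2) * Ω1 ^ p := by
      rw [Real.mul_rpow hN0.le (Real.rpow_nonneg hΩ1.le _), ← Real.rpow_mul hΩ1.le]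
      congr 1; ring
    rwa [hexp] at h5
  have h7 : (ω1 / Ω1) ^ p * (N:ℝ) ^ (1 - p / 2) ≤ (d:ℝ) ^ (1 - p / 2) := by
    rw [Real.div_rpow hω1.le hΩ1.le, Real.rpow_sub hN0, Real.rpow_one, div_mul_div_comm,
      div_le_iff₀ (by positivity)]
    calc ω1 ^ p * (N:ℝ) = (N:ℝ) * ω1 ^ p := by ring
      _ ≤ (d:ℝ) ^ (1 - p / 2) * ((N:ℝ) ^ (p / 2) * Ω1 ^ p) := h6
      _ = (d:ℝ) ^ (1 - p / 2) * (Ω1 ^ p * (N:ℝ) ^ (p / 2)) := by ring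
  have hep : (0:ℝ) < 2 / (2 - p) := by
    apply div_pos two_pos; linarith
  have h8 := Real.rpow_le_rpow
    (mul_nonneg (Real.rpow_nonneg (by positivity) _) (Real.rpow_nonneg hN0.le _)) h7 hep.le
  rw [Real.mul_rpow (Real.rpow_nonneg (by positivity) _) (Real.rpow_nonneg hN0.le _),
    ← Real.rpow_mul (by positivity : (0:ℝ) ≤ ω1 / Ω1), ← Real.rpow_mul hN0.le,
    ← Real.rpow_mul hd0.le] at h8
  have he1 : (1 - p / 2) * (2 / (2 - p)) = 1 := by
    have : (2:ℝ) - p ≠ 0 := by linarith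
    field_simp
  have he2 : p * (2 / (2 - p)) = 2 * p / (2 - p) := by ring
  rwa [he1, he2, Real.rpow_one, Real.rpow_one] at h8



/-- The `ℓ_p` norm on `ℝ^d`: `‖a‖_{ℓ_p^d} = (∑ i |a i|^p)^{1/p}`. -/
noncomputable def lpNorm (p : ℝ) {d : ℕ} (a : Fin d → ℝ) : ℝ :=
  (∑ i, |a i| ^ p) ^ (1 / p)

/-- **The dimension lower bound (3.5)–(3.8) in the proof of Theorem 1.7, case
`1 ≤ p < 2`.**  Let `w₁, …, w_N` be the rows of an `N × N` matrix `W` with `±1` entries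
and `W Wᵀ = N·I`, and let `T : ℝ^N → ℝ^d` be linear with `‖T eⱼ‖_{ℓ_p^d} ≤ Ω(1)` for all
`j` and `‖T(N^{-1/p} wᵢ)‖_{ℓ_p^d} ≥ ω(1)` for all `i`.  Then
`d ≥ (ω(1)/Ω(1))^{2p/(2-p)} · N`. -/

theorem hadamard_linear_lower_bound
    (p : ℝ) (hp : 1 ≤ p) (hp2 : p < 2) (N d : ℕ)
    (W : Matrix (Fin N) (Fin N) ℝ)
    (hWent : ∀ i j, W i j = 1 ∨ W i j = -1)
    (hW : W * W.transpose = (N : ℝ) • (1 : Matrix (Fin N) (Fin N) ℝ))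
    (ω1 Ω1 : ℝ) (hω1 : 0 < ω1) (hΩ1 : 0 < Ω1)
    (T : (Fin N → ℝ) →ₗ[ℝ] (Fin d → ℝ))
    (hTe : ∀ j, lpNorm p (T (Pi.single j 1)) ≤ Ω1)
    (hTw : ∀ i, ω1 ≤ lpNorm p (T (((N : ℝ) ^ (-(1 / p))) • W i))) :
    (ω1 / Ω1) ^ (2 * p / (2 - p)) * (N : ℝ) ≤ (d : ℝ) := by
  have hp0 : (0:ℝ) < p := by linarith
  rcases Nat.eq_zero_or_pos N with hN | hN
  · subst hN
    simp only [Nat.cast_zero, mul_zero]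
    positivity
  rcases Nat.eq_zero_or_pos d with hd | hd
  · exfalso
    have h := hTw ⟨0, hN⟩
    subst hd
    rw [lpNorm] at h
    simp only [Finset.univ_eq_empty, Finset.sum_empty] at h
    rw [Real.zero_rpow (one_div_ne_zero hp0.ne')] at h
    linarith
  have hN0 : (0:ℝ) < (N:ℝ) := by exact_mod_cast hN
  -- W^T W = N • 1
  have hW' : W.transpose * W = (N : ℝ) • (1 : Matrix (Fin N) (Fin N) ℝ) := by
    have h1 : W * ((N:ℝ)⁻¹ • W.transpose) = 1 := by
      rw [Matrix.mul_smul, hW, smul_smul, inv_mul_cancel₀ hN0.ne', one_smul]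
    have h2 : ((N:ℝ)⁻¹ • W.transpose) * W = 1 := mul_eq_one_comm.mp h1
    have h3 := congrArg (fun M => (N:ℝ) • M) h2
    simpa [Matrix.smul_mul, smul_smul, mul_inv_cancel₀ hN0.ne'] using h3
  -- expansion of T
  have hsingle : ∀ i : Fin N, (fun l => if i = l then (1:ℝ) else 0) = Pi.single i 1 := by
    intro i; funext l; simp [Pi.single_apply, eq_comm]
  have hexpand : ∀ (x : Fin N → ℝ) (k : Fin d), T x k = ∑ j, x j * T (Pi.single j 1) k := by
    intro x k
    have hx := LinearMap.pi_apply_eq_sum_univ T x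
    calc T x k = (∑ j, x j • T fun l => if j = l then (1:ℝ) else 0) k := by rw [← hx]
      _ = ∑ j, x j * (T fun l => if j = l then (1:ℝ) else 0) k := by
          rw [Finset.sum_apply]
          exact Finset.sum_congr rfl fun j _ => by rw [Pi.smul_apply, smul_eq_mul]
      _ = ∑ j, x j * T (Pi.single j 1) k :=
          Finset.sum_congr rfl fun j _ => by rw [hsingle j]
  apply aux_main p hp hp2 N d hN hd W hW' ω1 Ω1 hω1 hΩ1 (fun k j => T (Pi.single j 1) k)
  · -- hA
    intro j
    have h := hTe j
    rw [lpNorm] at h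
    have hnn : 0 ≤ ∑ k, |T (Pi.single j 1) k| ^ p :=
      Finset.sum_nonneg fun k _ => Real.rpow_nonneg (abs_nonneg _) _
    have h2 := Real.rpow_le_rpow (Real.rpow_nonneg hnn _) h hp0.le
    rwa [← Real.rpow_mul hnn, one_div_mul_cancel hp0.ne', Real.rpow_one] at h2
  · -- hD
    intro i
    have h := hTw i
    have hc : (0:ℝ) < (N:ℝ) ^ (-(1/p)) := Real.rpow_pos_of_pos hN0 _
    have hv : ∀ k : Fin d, (T (((N : ℝ) ^ (-(1/p))) • W i)) k =
        (N:ℝ) ^ (-(1/p)) * ∑ j, W i j * T (Pi.single j 1) k := by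
      intro k
      rw [map_smul, Pi.smul_apply, smul_eq_mul]
      congr 1
      exact hexpand (W i) k
    have hsum : ∑ k, |(T (((N : ℝ) ^ (-(1/p))) • W i)) k| ^ p =
        (N:ℝ)⁻¹ * ∑ k, |∑ j, W i j * T (Pi.single j 1) k| ^ p := by
      rw [Finset.mul_sum]
      refine Finset.sum_congr rfl fun k _ => ?_
      rw [hv k, abs_mul, abs_of_pos hc, Real.mul_rpow hc.le (abs_nonneg _),
        ← Real.rpow_mul (Nat.cast_nonneg N),
        show (-(1/p) * p) = (-1 : ℝ) by field_simp, Real.rpow_neg_one]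
    rw [lpNorm, hsum] at h
    have hnn : 0 ≤ (N:ℝ)⁻¹ * ∑ k, |∑ j, W i j * T (Pi.single j 1) k| ^ p := by
      positivity
    have h2 := Real.rpow_le_rpow hω1.le h hp0.le
    rw [← Real.rpow_mul hnn, one_div_mul_cancel hp0.ne', Real.rpow_one,
      inv_mul_eq_div, le_div_iff₀ hN0] at h2
    rw [mul_comm]
    exact h2
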